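/- Let m be a positive integer, a > 0, μ ∈ ℝ^m, and α ∈ ℝ^m with α_i ≠ 0 for every i. Let Y = (Y_1, …, Y_m) have mutually independent components, each uniformly distributed on [−a, a]. Then the expected value of the conjunctive RBF satisfies the strict bound E[P(Y; μ, α)] < 4^{−m}. -/

import Mathlib

open MeasureTheory ProbabilityTheory Real

noncomputable def logisticFun (y μ α : ℝ) : ℝ := 1 / (1 + Real.exp (-α * (y - μ)))

noncomputable def rbfFun (y μ α : ℝ) : ℝ :=
  Real.exp (-α * (y - μ)) / (1 + Real.exp (-α * (y - μ))) ^ 2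

noncomputable def conjLog {m : ℕ} (y μ α : Fin m → ℝ) : ℝ :=
  ∏ i, logisticFun (y i) (μ i) (α i)

noncomputable def conjRBF {m : ℕ} (y μ α : Fin m → ℝ) : ℝ :=
  ∏ i, rbfFun (y i) (μ i) (α i)

open scoped Classical in
/-- Decision function `H(y; (μl, αl), (μk, αk))`. -/
noncomputable def decisionH {m : ℕ} (y μl αl μk αk : Fin m → ℝ) : ℝ :=
  if ∀ i, μl i < μk i then conjRBF y μk αk else 0

/-! Each factor `t / (1 + t)²`, `t = exp (-α (y - μ)) > 0`, is at most `1/4` by AM-GM, with equality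
only at `t = 1`, i.e. at `y = μ` when `α ≠ 0`. So `P(Y) < 4^{-m}` unless `Y₁ = μ₁`, an event of
probability zero for a uniform `Y₁`; a strict almost-sure bound on a probability space gives a strict
bound on the expectation. -/

lemma rbfFun_pos (y μ α : ℝ) : 0 < rbfFun y μ α := by
  unfold rbfFun
  positivity

lemma rbfFun_le_quarter (y μ α : ℝ) : rbfFun y μ α ≤ 1 / 4 := by
  unfold rbfFun
  have ht := Real.exp_pos (-α * (y - μ))
  rw [div_le_div_iff₀ (by positivity) (by norm_num)]
  nlinarith [sq_nonneg (1 - Real.exp (-α * (y - μ)))]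

lemma rbfFun_lt_quarter {y μ α : ℝ} (hα : α ≠ 0) (hy : y ≠ μ) : rbfFun y μ α < 1 / 4 := by
  unfold rbfFun
  have ht := Real.exp_pos (-α * (y - μ))
  have ht_ne_one : Real.exp (-α * (y - μ)) ≠ 1 := by
    rw [Ne, Real.exp_eq_one_iff]
    exact mul_ne_zero (neg_ne_zero.mpr hα) (sub_ne_zero.mpr hy)
  have hsq : 0 < (1 - Real.exp (-α * (y - μ))) ^ 2 :=
    sq_pos_of_ne_zero (sub_ne_zero.mpr ht_ne_one.symm)
  rw [div_lt_div_iff₀ (by positivity) (by norm_num)]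
  nlinarith

lemma measurable_conjRBF {m : ℕ} (μ α : Fin m → ℝ) :
    Measurable fun y : Fin m → ℝ => conjRBF y μ α := by
  unfold conjRBF rbfFun
  fun_prop

lemma conjRBF_nonneg {m : ℕ} (y μ α : Fin m → ℝ) : 0 ≤ conjRBF y μ α :=
  Finset.prod_nonneg fun _ _ => (rbfFun_pos _ _ _).le

lemma conjRBF_le_quarter_pow {m : ℕ} (y μ α : Fin m → ℝ) : conjRBF y μ α ≤ (1 / 4 : ℝ) ^ m := by
  simpa [conjRBF] using Finset.prod_le_prod (s := Finset.univ)
    (fun i _ => (rbfFun_pos (y i) (μ i) (α i)).le) (fun i _ => rbfFun_le_quarter (y i) (μ i) (α i))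

lemma conjRBF_lt_quarter_pow {m : ℕ} {y μ α : Fin m → ℝ} {i : Fin m} (hα : α i ≠ 0)
    (hy : y i ≠ μ i) : conjRBF y μ α < (1 / 4 : ℝ) ^ m := by
  simpa [conjRBF] using Finset.prod_lt_prod (fun j _ => rbfFun_pos (y j) (μ j) (α j))
    (fun j _ => rbfFun_le_quarter (y j) (μ j) (α j))
    ⟨i, Finset.mem_univ _, rbfFun_lt_quarter hα hy⟩

lemma integral_lt_of_ae_lt {Ω : Type*} [MeasurableSpace Ω] {P : Measure Ω}
    [IsProbabilityMeasure P] {f : Ω → ℝ} {c : ℝ} (hf : Integrable f P)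
    (hlt : ∀ᵐ ω ∂P, f ω < c) : ∫ ω, f ω ∂P < c := by
  have hgap : Integrable (fun ω => c - f ω) P := (integrable_const c).sub hf
  have hgap_pos : 0 < ∫ ω, (c - f ω) ∂P := by
    rw [integral_pos_iff_support_of_nonneg_ae (hlt.mono fun ω h => (sub_pos.2 h).le) hgap,
      pos_iff_ne_zero, Ne, measure_eq_zero_iff_ae_notMem]
    intro hzero
    obtain ⟨ω, hω_lt, hω_eq⟩ := (hlt.and hzero).exists
    exact hω_eq (sub_pos.2 hω_lt).ne'
  rw [integral_sub (integrable_const c) hf, integral_const, probReal_univ, one_smul] at hgap_pos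
  linarith

lemma MeasureTheory.pdf.IsUniform.ae_ne {Ω E : Type*} [MeasurableSpace Ω] [MeasurableSpace E]
    [MeasurableSingletonClass E] {P : Measure Ω} {ν : Measure E} [NullSingletonClass ν] {X : Ω → E}
    {s : Set E} (hu : pdf.IsUniform X s P ν) (hX : AEMeasurable X P) (c : E) :
    ∀ᵐ ω ∂P, X ω ≠ c := by
  have hatom : Measure.map X P {c} = 0 := hu.absolutelyContinuous (measure_singleton c)
  rw [Measure.map_apply_of_aemeasurable hX (measurableSet_singleton c)] at hatom
  exact measure_eq_zero_iff_ae_notMem.1 hatom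

theorem expectation_conjRBF_uniform_lt_general
    {Ω : Type*} [MeasurableSpace Ω] (Pr : Measure Ω) [IsProbabilityMeasure Pr]
    (m : ℕ) (hm : 0 < m) (a : ℝ) (ha : 0 < a) (μ α : Fin m → ℝ)
    (hα : ∀ i, α i ≠ 0) (Y : Fin m → Ω → ℝ)
    (hY : ∀ i, pdf.IsUniform (Y i) (Set.Icc (-a) a) Pr) :
    ∫ ω, conjRBF (fun i => Y i ω) μ α ∂Pr < (1 / 4 : ℝ) ^ m := by
  have hY_meas : ∀ i, AEMeasurable (Y i) Pr := fun i =>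
    (hY i).aemeasurable (by simp [ha]) (by simp)
  have hP_meas : AEMeasurable (fun ω => conjRBF (fun i => Y i ω) μ α) Pr :=
    (measurable_conjRBF μ α).comp_aemeasurable (aemeasurable_pi_lambda _ hY_meas)
  have hP_int : Integrable (fun ω => conjRBF (fun i => Y i ω) μ α) Pr :=
    .of_bound hP_meas.aestronglyMeasurable _ <| .of_forall fun ω => by
      rw [Real.norm_of_nonneg (conjRBF_nonneg _ _ _)]
      exact conjRBF_le_quarter_pow _ _ _
  let i₀ : Fin m := ⟨0, hm⟩
  refine integral_lt_of_ae_lt hP_int ?_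
  filter_upwards [(hY i₀).ae_ne (hY_meas i₀) (μ i₀)] with ω hω
  exact conjRBF_lt_quarter_pow (hα i₀) hω

theorem expectation_conjRBF_uniform_lt
    {Ω : Type*} [MeasurableSpace Ω] (Pr : Measure Ω) [IsProbabilityMeasure Pr]
    (m : ℕ) (hm : 0 < m) (a : ℝ) (ha : 0 < a) (μ α : Fin m → ℝ)
    (hα : ∀ i, α i ≠ 0) (Y : Fin m → Ω → ℝ)
    (hY : ∀ i, pdf.IsUniform (Y i) (Set.Icc (-a) a) Pr)
    (hInd : iIndepFun Y Pr) :
    ∫ ω, conjRBF (fun i => Y i ω) μ α ∂Pr < (1 / 4 : ℝ) ^ m :=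
  expectation_conjRBF_uniform_lt_general Pr m hm a ha μ α hα Y hY
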